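/- arXiv:1111.5357 — 2 statements merged into one kernel-verified Lean document; each statement's English description precedes it below -/
import Mathlib

section
/- If G is a loop-free digraph and G^ℓ is obtained from G by adding a self-loop at every vertex, then crank(G^ℓ) = crank(G) + 1, provided G has at least one vertex. -/
open scoped Classical

variable {V : Type*}

/-- `b` is reachable from `a` by a (possibly empty) directed path staying inside `S`. -/
def ReachIn (E : V → V → Prop) (S : Finset V) (a b : V) : Prop :=
  Relation.ReflTransGen (fun x y => x ∈ S ∧ y ∈ S ∧ E x y) a b

/-- The induced subdigraph `G[S]` is strongly connected. -/
def StronglyConnIn (E : V → V → Prop) (S : Finset V) : Prop :=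
  ∀ a ∈ S, ∀ b ∈ S, ReachIn E S a b

/-- The induced subdigraph `G[S]` contains at least one edge. -/
def HasEdgeIn (E : V → V → Prop) (S : Finset V) : Prop :=
  ∃ a ∈ S, ∃ b ∈ S, E a b

/-- `G[S]` is acyclic: every strongly connected component of `G[S]` is trivial,
equivalently there is no edge lying on a closed walk inside `S`. -/
def AcyclicIn (E : V → V → Prop) (S : Finset V) : Prop :=
  ¬ ∃ a ∈ S, ∃ b ∈ S, E a b ∧ ReachIn E S b a

open Classical in
/-- The strongly connected component of `v` in the induced subdigraph `G[S]`. -/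
noncomputable def sccOf [DecidableEq V] (E : V → V → Prop) (S : Finset V) (v : V) : Finset V :=
  S.filter (fun u => ReachIn E S v u ∧ ReachIn E S u v)

open Classical in
/-- Fuel-based auxiliary function implementing the recursive definition of cycle rank. -/
noncomputable def crankAux [DecidableEq V] (E : V → V → Prop) : ℕ → Finset V → ℕ
  | 0, _ => 0
  | n + 1, S =>
    if AcyclicIn E S then 0
    else if StronglyConnIn E S then
      1 + sInf {m | ∃ v ∈ S, crankAux E n (S.erase v) = m}
    else
      S.sup (fun v => crankAux E n (sccOf E S v))

/-- The cycle rank of the digraph `(V, E)`. -/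
noncomputable def crank [DecidableEq V] [Fintype V] (E : V → V → Prop) : ℕ :=
  crankAux E (Fintype.card V) Finset.univ

/-! Adding loops changes no reachability relation, so strong connectivity and the strongly
connected components of every induced subgraph stay the same; it only makes every nonempty vertex
set cyclic. Hence, by induction along the recursion, each branch gains exactly one: `min` and `max`
commute with `+ 1`, and an acyclic vertex set of the loop-free `G` becomes in `G^ℓ` a union of
looped single vertices, each of cycle rank `1`. -/

theorem Nat.sInf_image_add_one {ι : Type*} {s : Set ι} (hs : s.Nonempty) (hfin : s.Finite)
    (f : ι → ℕ) : sInf ((fun i => f i + 1) '' s) = sInf (f '' s) + 1 := by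
  rw [(hfin.image f).map_sInf_of_monotone (f := (· + 1)) (fun _ _ => Nat.succ_le_succ)
    (hs.image f), Set.image_image]

section

variable {E : V → V → Prop} {S : Finset V} {a b v : V}

def addLoops (E : V → V → Prop) : V → V → Prop := fun a b => E a b ∨ a = b

theorem reachIn_addLoops_iff : ReachIn (addLoops E) S a b ↔ ReachIn E S a b := by
  refine ⟨fun h => ?_, fun h =>
    Relation.ReflTransGen.mono (fun _ _ ⟨hx, hy, hxy⟩ => ⟨hx, hy, .inl hxy⟩) _ _ h⟩
  induction h with
  | refl => exact .refl
  | tail _ hstep ih =>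
    obtain ⟨hx, hy, hxy | rfl⟩ := hstep
    exacts [ih.tail ⟨hx, hy, hxy⟩, ih]

theorem stronglyConnIn_addLoops_iff : StronglyConnIn (addLoops E) S ↔ StronglyConnIn E S := by
  simp only [StronglyConnIn, reachIn_addLoops_iff]

theorem sccOf_addLoops [DecidableEq V] (E : V → V → Prop) (S : Finset V) (v : V) :
    sccOf (addLoops E) S v = sccOf E S v := by
  simp only [sccOf, reachIn_addLoops_iff]

theorem not_acyclicIn_addLoops (hS : S.Nonempty) : ¬ AcyclicIn (addLoops E) S := by
  obtain ⟨v, hv⟩ := hS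
  exact fun h => h ⟨v, hv, v, hv, .inr rfl, .refl⟩

theorem acyclicIn_empty (E : V → V → Prop) : AcyclicIn E ∅ := by
  simp [AcyclicIn]

theorem acyclicIn_singleton (hE : ∀ v, ¬ E v v) (v : V) : AcyclicIn E {v} := by
  rintro ⟨a, ha, b, hb, hab, -⟩
  rw [Finset.mem_singleton] at ha hb
  subst ha hb
  exact hE _ hab

theorem StronglyConnIn.eq_singleton_of_acyclicIn (hsc : StronglyConnIn E S) (hac : AcyclicIn E S)
    (hS : S.Nonempty) : ∃ v, S = {v} := by
  refine hS.exists_eq_singleton_or_nontrivial.resolve_right fun ⟨a, ha, b, hb, hab⟩ => ?_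
  rcases (hsc a ha b hb).cases_head with rfl | ⟨c, ⟨-, hc, hac'⟩, -⟩
  · exact hab rfl
  · exact hac ⟨a, ha, c, hc, hac', hsc c hc a ha⟩

theorem mem_sccOf_self [DecidableEq V] (hv : v ∈ S) : v ∈ sccOf E S v :=
  Finset.mem_filter.2 ⟨hv, .refl, .refl⟩

theorem sccOf_ssubset [DecidableEq V] (hsc : ¬ StronglyConnIn E S) (v : V) :
    sccOf E S v ⊂ S := by
  refine ⟨Finset.filter_subset _ _, fun hsub => hsc fun a ha b hb => ?_⟩
  exact (Finset.mem_filter.1 (hsub ha)).2.2.trans (Finset.mem_filter.1 (hsub hb)).2.1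

theorem sccOf_eq_singleton [DecidableEq V] (hac : AcyclicIn E S) (hv : v ∈ S) :
    sccOf E S v = {v} := by
  refine Finset.eq_singleton_iff_unique_mem.2 ⟨mem_sccOf_self hv, fun u hu => ?_⟩
  obtain ⟨-, hvu, huv⟩ := Finset.mem_filter.1 hu
  rcases hvu.cases_head with rfl | ⟨c, ⟨-, hc, hvc⟩, hcu⟩
  · rfl
  · exact absurd ⟨v, hv, c, hc, hvc, hcu.trans huv⟩ hac

end

section crankAux

variable [DecidableEq V] {E : V → V → Prop} {S : Finset V}

theorem crankAux_of_acyclicIn (n : ℕ) (hac : AcyclicIn E S) : crankAux E n S = 0 := by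
  cases n <;> simp [crankAux, hac]

theorem crankAux_succ_of_stronglyConnIn (n : ℕ) (hac : ¬ AcyclicIn E S)
    (hsc : StronglyConnIn E S) :
    crankAux E (n + 1) S = 1 + sInf ((fun v => crankAux E n (S.erase v)) '' S) := by
  simp only [crankAux, if_neg hac, if_pos hsc]
  rfl

theorem crankAux_succ_of_not_stronglyConnIn (n : ℕ) (hac : ¬ AcyclicIn E S)
    (hsc : ¬ StronglyConnIn E S) :
    crankAux E (n + 1) S = S.sup fun v => crankAux E n (sccOf E S v) := by
  simp only [crankAux, if_neg hac, if_neg hsc]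

/-- In the acyclic case all strongly connected components are single loop-free vertices, of
cycle rank `0`. -/
theorem crankAux_succ_of_not_stronglyConnIn_of_loopFree (n : ℕ) (hE : ∀ v, ¬ E v v)
    (hsc : ¬ StronglyConnIn E S) :
    crankAux E (n + 1) S = S.sup fun v => crankAux E n (sccOf E S v) := by
  by_cases hac : AcyclicIn E S
  · refine (crankAux_of_acyclicIn _ hac).trans ((Finset.sup_eq_bot_iff _ _).2 fun v hv => ?_).symm
    rw [sccOf_eq_singleton hac hv]
    exact crankAux_of_acyclicIn n (acyclicIn_singleton hE v)
  · exact crankAux_succ_of_not_stronglyConnIn n hac hsc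

theorem crankAux_addLoops_singleton (n : ℕ) (v : V) : crankAux (addLoops E) (n + 1) {v} = 1 := by
  rw [crankAux_succ_of_stronglyConnIn n (not_acyclicIn_addLoops (Finset.singleton_nonempty v))]
  · simp [crankAux_of_acyclicIn n (acyclicIn_empty _)]
  · intro a ha b hb
    rw [Finset.mem_singleton.1 ha, Finset.mem_singleton.1 hb]
    exact .refl

end crankAux

theorem crankAux_addLoops [DecidableEq V] {E : V → V → Prop} (hE : ∀ v, ¬ E v v) (n : ℕ) :
    ∀ S : Finset V, S.Nonempty → S.card ≤ n →
      crankAux (addLoops E) n S = crankAux E n S + 1 := by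
  induction n with
  | zero => exact fun S hS hcard => absurd (Finset.card_pos.2 hS) (by omega)
  | succ n ih =>
    intro S hS hcard
    have ih' : ∀ T ⊂ S, T.Nonempty → crankAux (addLoops E) n T = crankAux E n T + 1 :=
      fun T hT hTne => ih T hTne (by have := Finset.card_lt_card hT; omega)
    have hacℓ := not_acyclicIn_addLoops (E := E) hS
    by_cases hsc : StronglyConnIn E S
    · have hscℓ := stronglyConnIn_addLoops_iff.2 hsc
      by_cases hac : AcyclicIn E S
      · obtain ⟨v, rfl⟩ := hsc.eq_singleton_of_acyclicIn hac hS
        rw [crankAux_addLoops_singleton, crankAux_of_acyclicIn _ hac]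
      · have hS₂ : S.Nontrivial := hS.exists_eq_singleton_or_nontrivial.resolve_left
          fun ⟨v, hv⟩ => hac (hv ▸ acyclicIn_singleton hE v)
        rw [crankAux_succ_of_stronglyConnIn n hacℓ hscℓ,
          crankAux_succ_of_stronglyConnIn n hac hsc,
          Set.image_congr fun v hv => ih' _ (Finset.erase_ssubset hv) hS₂.erase_nonempty,
          Nat.sInf_image_add_one hS S.finite_toSet, add_assoc]
    · rw [crankAux_succ_of_not_stronglyConnIn n hacℓ (mt stronglyConnIn_addLoops_iff.1 hsc),
        crankAux_succ_of_not_stronglyConnIn_of_loopFree n hE hsc, Finset.sup_add hS]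
      refine Finset.sup_congr rfl fun v hv => ?_
      rw [sccOf_addLoops]
      exact ih' _ (sccOf_ssubset hsc v) ⟨v, mem_sccOf_self hv⟩

/-- If `G` is loop-free and `G^ℓ` is obtained by adding a self-loop at every
vertex, then `crank(G^ℓ) = crank(G) + 1`, provided `G` has at least one vertex. -/
theorem crank_addLoops {V : Type*} [DecidableEq V] [Fintype V] [Nonempty V]
    (E : V → V → Prop) (hloopfree : ∀ v, ¬ E v v) :
    crank (fun a b => E a b ∨ a = b) = crank E + 1 :=
  crankAux_addLoops hloopfree _ _ Finset.univ_nonempty Finset.card_univ.le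
end

section
/- For every digraph G, the weak separator number of G is at most the directed pathwidth of G: snum(G) ≤ dpw(G). -/
open scoped Classical

variable {V : Type*}

/-- `S` is a weak balanced separator for `U`: every strongly connected component of
`G[U ∖ S]` contains at most `⌈|U ∖ S|/2⌉` vertices. -/
def IsWeakBalSep {V : Type*} [DecidableEq V] (E : V → V → Prop) (U S : Finset V) : Prop :=
  ∀ v ∈ U \ S, (sccOf E (U \ S) v).card ≤ ((U \ S).card + 1) / 2
/-- The minimum size of a weak balanced separator for `U`. -/
noncomputable def minWeakSep {V : Type*} [DecidableEq V] (E : V → V → Prop) (U : Finset V) : ℕ :=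
  sInf {c : ℕ | ∃ S : Finset V, S.card ≤ c ∧ IsWeakBalSep E U S}

/-- The weak separator number: the maximum over all `U ⊆ V` of the minimum size of a
weak balanced separator for `U`. -/
noncomputable def snum {V : Type*} [DecidableEq V] [Fintype V] (E : V → V → Prop) : ℕ :=
  Finset.univ.powerset.sup (minWeakSep E)
/-- `L` is a directed path decomposition of `(V, E)`: a sequence of bags covering all
vertices, such that `W_i ∩ W_k ⊆ W_j` for `i < j < k`, and each edge `(u,v)` either has
both endpoints in a common bag, or `u` occurs in a bag strictly before a bag containing `v`. -/
def IsDirPathDecomp {V : Type*} (E : V → V → Prop) (L : List (Finset V)) : Prop :=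
  (∀ v : V, ∃ W ∈ L, v ∈ W) ∧
  (∀ i j k : ℕ, i < j → j < k →
    ∀ (hi : i < L.length) (hj : j < L.length) (hk : k < L.length),
      ∀ v, v ∈ L.get ⟨i, hi⟩ → v ∈ L.get ⟨k, hk⟩ → v ∈ L.get ⟨j, hj⟩) ∧
  (∀ u v, E u v → (∃ W ∈ L, u ∈ W ∧ v ∈ W) ∨
      ∃ (i j : ℕ) (hi : i < L.length) (hj : j < L.length),
        i < j ∧ u ∈ L.get ⟨i, hi⟩ ∧ v ∈ L.get ⟨j, hj⟩)

/-- The directed pathwidth of `(V, E)`: the minimum, over all directed path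
decompositions, of (maximum bag size) − 1. -/
noncomputable def dpw {V : Type*} [Fintype V] (E : V → V → Prop) : ℕ :=
  sInf {w : ℕ | ∃ L : List (Finset V), IsDirPathDecomp E L ∧ ∀ W ∈ L, W.card ≤ w + 1}


/-!
Fix a directed path decomposition of width `w` and a set `U`. Call a vertex *before `t`* if
it occurs only in bags of index `< t`, and *from `t`* if it occurs only in bags of index `≥ t`.
No edge leads from a vertex from `t` to a vertex before `t`, so once every vertex of `U ∖ S`
is of one of the two kinds, each strongly connected component of `G[U ∖ S]` is of a single
kind. Going through the bags from left to right, the number of `U`-vertices before `t` grows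
and the number from `t` shrinks; at the bag `W_b` where they cross, `U` is split by
`W_b ∩ U` into two almost balanced sides, and returning at least one vertex of `W_b` to the
smaller side leaves a separator of size at most `|W_b| - 1 ≤ w`.
-/

open Finset

theorem ReachIn.mem_of_forall_adj {E : V → V → Prop} {T Q : Finset V}
    (hQ : ∀ a ∈ Q, ∀ b ∈ T, E a b → b ∈ Q) {a b : V} (h : ReachIn E T a b) (ha : a ∈ Q) : b ∈ Q := by
  induction h with
  | refl => exact ha
  | tail _ e ih => exact hQ _ ih _ e.2.1 e.2.2

section Separators

variable [DecidableEq V] {E : V → V → Prop}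

theorem sccOf_subset_or_subset {T P Q : Finset V} (hT : T ⊆ P ∪ Q)
    (hQP : ∀ a ∈ Q, ∀ b ∈ P, ¬E a b) (v : V) :
    sccOf E T v ⊆ P ∨ sccOf E T v ⊆ Q := by
  have hclosed : ∀ a ∈ Q, ∀ b ∈ T, E a b → b ∈ Q := fun a ha b hb hab =>
    (mem_union.mp (hT hb)).resolve_left fun hbP => hQP a ha b hbP hab
  by_cases hvQ : v ∈ Q
  · exact .inr fun u hu => (mem_filter.mp hu).2.1.mem_of_forall_adj hclosed hvQ
  · refine .inl fun u hu => ?_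
    obtain ⟨huT, -, huv⟩ := mem_filter.mp hu
    exact (mem_union.mp (hT huT)).resolve_right fun huQ =>
      hvQ (huv.mem_of_forall_adj hclosed huQ)

theorem isWeakBalSep_of_subset_union {U S P Q : Finset V} (hcov : U \ S ⊆ P ∪ Q)
    (hQP : ∀ a ∈ Q, ∀ b ∈ P, ¬E a b) (hP : 2 * #P ≤ #(U \ S) + 1)
    (hQ : 2 * #Q ≤ #(U \ S) + 1) : IsWeakBalSep E U S := by
  intro v hv
  rcases sccOf_subset_or_subset hcov hQP v with h | h
  · have := card_le_card h; omega
  · have := card_le_card h; omega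

theorem minWeakSep_le_card {U S : Finset V} (h : IsWeakBalSep E U S) :
    minWeakSep E U ≤ #S :=
  Nat.sInf_le ⟨S, le_rfl, h⟩

end Separators

theorem List.lt_length_of_mem_getD {L : List (Finset V)} {j : ℕ} {v : V}
    (h : v ∈ L.getD j ∅) : j < L.length := by
  by_contra hj
  rw [List.getD_eq_default _ _ (not_lt.mp hj)] at h
  exact notMem_empty v h

theorem List.card_getD_le {L : List (Finset V)} {k : ℕ} (h : ∀ W ∈ L, #W ≤ k) (j : ℕ) :
    #(L.getD j ∅) ≤ k := by
  by_cases hj : j < L.length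
  · exact List.getD_eq_getElem _ _ hj ▸ h _ (L.getElem_mem hj)
  · rw [List.getD_eq_default _ _ (not_lt.mp hj), card_empty]
    exact Nat.zero_le k

namespace IsDirPathDecomp

variable {E : V → V → Prop} {L : List (Finset V)}

theorem exists_mem_getD (hL : IsDirPathDecomp E L) (v : V) : ∃ j, v ∈ L.getD j ∅ := by
  obtain ⟨W, hW, hv⟩ := hL.1 v
  obtain ⟨j, hj, rfl⟩ := List.mem_iff_getElem.mp hW
  exact ⟨j, by rwa [List.getD_eq_getElem _ _ hj]⟩

theorem mem_getD_of_lt_of_lt (hL : IsDirPathDecomp E L) {i j k : ℕ} (hij : i < j)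
    (hjk : j < k) {v : V} (hi : v ∈ L.getD i ∅) (hk : v ∈ L.getD k ∅) : v ∈ L.getD j ∅ := by
  have hkL := List.lt_length_of_mem_getD hk
  rw [List.getD_eq_getElem _ _ (hij.trans hjk |>.trans hkL)] at hi
  rw [List.getD_eq_getElem _ _ hkL] at hk
  rw [List.getD_eq_getElem _ _ (hjk.trans hkL)]
  exact hL.2.1 i j k hij hjk _ _ hkL v hi hk

theorem exists_le_of_adj (hL : IsDirPathDecomp E L) {u v : V} (h : E u v) :
    ∃ i j, i ≤ j ∧ u ∈ L.getD i ∅ ∧ v ∈ L.getD j ∅ := by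
  rcases hL.2.2 u v h with ⟨W, hW, hu, hv⟩ | ⟨i, j, hi, hj, hij, hu, hv⟩
  · obtain ⟨j, hj, rfl⟩ := List.mem_iff_getElem.mp hW
    exact ⟨j, j, le_rfl, by rwa [List.getD_eq_getElem _ _ hj],
      by rwa [List.getD_eq_getElem _ _ hj]⟩
  · exact ⟨i, j, hij.le, by rwa [List.getD_eq_getElem _ _ hi],
      by rwa [List.getD_eq_getElem _ _ hj]⟩

end IsDirPathDecomp

def OnlyBefore (L : List (Finset V)) (t : ℕ) (v : V) : Prop :=
  ∀ j, t ≤ j → v ∉ L.getD j ∅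

def OnlyFrom (L : List (Finset V)) (t : ℕ) (v : V) : Prop :=
  ∀ j < t, v ∉ L.getD j ∅

section Thresholds

variable {E : V → V → Prop} {L : List (Finset V)} {s t : ℕ} {v : V}

theorem OnlyBefore.mono (hst : s ≤ t) (h : OnlyBefore L s v) : OnlyBefore L t v :=
  fun j hj => h j (hst.trans hj)

theorem OnlyFrom.anti (hst : s ≤ t) (h : OnlyFrom L t v) : OnlyFrom L s v :=
  fun j hj => h j (hj.trans_le hst)

theorem OnlyBefore.of_succ (h : OnlyBefore L (t + 1) v) (hv : v ∉ L.getD t ∅) :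
    OnlyBefore L t v := fun j hj => by
  rcases hj.eq_or_lt with rfl | hj
  exacts [hv, h j hj]

theorem OnlyFrom.succ (h : OnlyFrom L t v) (hv : v ∉ L.getD t ∅) : OnlyFrom L (t + 1) v :=
  fun j hj => by
  rcases (Nat.lt_succ_iff.mp hj).eq_or_lt with rfl | hj
  exacts [hv, h j hj]

theorem not_onlyBefore_zero (hL : IsDirPathDecomp E L) : ¬OnlyBefore L 0 v := fun h =>
  let ⟨j, hj⟩ := hL.exists_mem_getD v
  h j j.zero_le hj

theorem onlyFrom_zero : OnlyFrom L 0 v := fun _ hj => absurd hj (Nat.not_lt_zero _)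

theorem not_onlyFrom_length (hL : IsDirPathDecomp E L) : ¬OnlyFrom L L.length v := fun h =>
  let ⟨j, hj⟩ := hL.exists_mem_getD v
  h j (List.lt_length_of_mem_getD hj) hj

theorem not_onlyBefore_and_onlyFrom (hL : IsDirPathDecomp E L) :
    ¬(OnlyBefore L t v ∧ OnlyFrom L t v) := fun ⟨hb, hf⟩ =>
  let ⟨j, hj⟩ := hL.exists_mem_getD v
  if h : t ≤ j then hb j h hj else hf j (not_le.mp h) hj

theorem not_adj_of_onlyFrom_of_onlyBefore (hL : IsDirPathDecomp E L) {a b : V}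
    (ha : OnlyFrom L t a) (hb : OnlyBefore L t b) : ¬E a b := fun hab => by
  obtain ⟨i, j, hij, hi, hj⟩ := hL.exists_le_of_adj hab
  by_cases hti : t ≤ i
  · exact hb j (hti.trans hij) hj
  · exact ha i (not_le.mp hti) hi

theorem onlyBefore_or_onlyFrom_succ (hL : IsDirPathDecomp E L) {b : ℕ}
    (hv : v ∉ L.getD b ∅) : OnlyBefore L b v ∨ OnlyFrom L (b + 1) v := by
  by_contra! h
  obtain ⟨hb, hf⟩ := h
  simp only [OnlyBefore, OnlyFrom, not_forall, not_not] at hb hf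
  obtain ⟨k, hbk, hk⟩ := hb
  obtain ⟨i, hib, hi⟩ := hf
  have hbk : b < k := hbk.lt_of_ne (by rintro rfl; exact hv hk)
  have hib : i < b := (Nat.lt_succ_iff.mp hib).lt_of_ne (by rintro rfl; exact hv hi)
  exact hv (hL.mem_getD_of_lt_of_lt hib hbk hi hk)

theorem exists_filter_onlyBefore_lt_filter_onlyFrom {U : Finset V}
    (hL : IsDirPathDecomp E L) (hU : U.Nonempty) :
    ∃ b, #{v ∈ U | OnlyBefore L b v} < #{v ∈ U | OnlyFrom L b v} ∧
      #{v ∈ U | OnlyFrom L (b + 1) v} ≤ #{v ∈ U | OnlyBefore L (b + 1) v} := by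
  have h₀ : #{v ∈ U | OnlyBefore L 0 v} < #{v ∈ U | OnlyFrom L 0 v} := by
    rw [filter_false_of_mem fun _ _ => not_onlyBefore_zero hL,
      filter_true_of_mem fun _ _ => onlyFrom_zero]
    exact hU.card_pos
  have hlen : #{v ∈ U | OnlyFrom L L.length v} ≤ #{v ∈ U | OnlyBefore L L.length v} := by
    rw [filter_false_of_mem fun _ _ => not_onlyFrom_length hL]
    exact Nat.zero_le _
  simpa only [not_le] using
    Nat.exists_not_and_succ_of_not_zero_of_exists
      (p := fun t => #{v ∈ U | OnlyFrom L t v} ≤ #{v ∈ U | OnlyBefore L t v})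
      (not_le.mpr h₀) ⟨_, hlen⟩

end Thresholds

section BagCuts

variable [DecidableEq V] {E : V → V → Prop} {L : List (Finset V)} {U X : Finset V} {b : ℕ}

theorem sdiff_getD_subset_union (hL : IsDirPathDecomp E L) :
    U \ L.getD b ∅ ⊆ {v ∈ U | OnlyBefore L b v} ∪ {v ∈ U | OnlyFrom L (b + 1) v} := by
  intro v hv
  obtain ⟨hvU, hvb⟩ := mem_sdiff.mp hv
  rcases onlyBefore_or_onlyFrom_succ hL hvb with h | h
  · exact mem_union_left _ (mem_filter.mpr ⟨hvU, h⟩)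
  · exact mem_union_right _ (mem_filter.mpr ⟨hvU, h⟩)

theorem card_sdiff_getD_sdiff (hL : IsDirPathDecomp E L) (hXU : X ⊆ U)
    (hXb : X ⊆ L.getD b ∅) :
    #(U \ (L.getD b ∅ \ X)) =
      #{v ∈ U | OnlyBefore L b v} + #{v ∈ U | OnlyFrom L (b + 1) v} + #X := by
  have hsplit : U \ L.getD b ∅ = {v ∈ U | OnlyBefore L b v} ∪ {v ∈ U | OnlyFrom L (b + 1) v} :=
    (sdiff_getD_subset_union hL).antisymm <| union_subset
      (fun v hv => mem_sdiff.mpr ⟨(mem_filter.mp hv).1, (mem_filter.mp hv).2 b le_rfl⟩)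
      (fun v hv => mem_sdiff.mpr ⟨(mem_filter.mp hv).1, (mem_filter.mp hv).2 b b.lt_succ_self⟩)
  have hdisj : Disjoint {v ∈ U | OnlyBefore L b v} {v ∈ U | OnlyFrom L (b + 1) v} :=
    disjoint_filter.mpr fun v _ hb hf =>
      not_onlyBefore_and_onlyFrom hL ⟨hb.mono b.le_succ, hf⟩
  rw [sdiff_sdiff_right', inf_eq_inter, inter_eq_right.mpr hXU, sup_eq_union,
    card_union_of_disjoint (disjoint_sdiff_self_left.mono_right hXb), hsplit,
    card_union_of_disjoint hdisj]

theorem sdiff_getD_sdiff_subset (hL : IsDirPathDecomp E L) :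
    U \ (L.getD b ∅ \ X) ⊆
      {v ∈ U | OnlyBefore L b v} ∪ {v ∈ U | OnlyFrom L (b + 1) v} ∪ X := by
  rw [sdiff_sdiff_right']
  exact union_subset_union (sdiff_getD_subset_union hL) inter_subset_right

theorem isWeakBalSep_getD_sdiff_of_subset_onlyBefore (hL : IsDirPathDecomp E L)
    (hX : X ⊆ {v ∈ U | OnlyBefore L (b + 1) v} ∩ L.getD b ∅)
    (h₁ : #{v ∈ U | OnlyBefore L b v} + #X ≤ #{v ∈ U | OnlyFrom L (b + 1) v} + 1)
    (h₂ : #{v ∈ U | OnlyFrom L (b + 1) v} ≤ #{v ∈ U | OnlyBefore L b v} + #X + 1) :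
    IsWeakBalSep E U (L.getD b ∅ \ X) := by
  have hXU : X ⊆ U := hX.trans (inter_subset_left.trans (filter_subset _ _))
  have hn := card_sdiff_getD_sdiff hL hXU (hX.trans inter_subset_right)
  have hP := card_union_le {v ∈ U | OnlyBefore L b v} X
  refine isWeakBalSep_of_subset_union (P := {v ∈ U | OnlyBefore L b v} ∪ X)
    ((sdiff_getD_sdiff_subset hL).trans (union_right_comm _ _ _).le) ?_ (by omega) (by omega)
  intro a ha c hc
  refine not_adj_of_onlyFrom_of_onlyBefore hL (mem_filter.mp ha).2 ?_
  rcases mem_union.mp hc with hc | hc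
  · exact (mem_filter.mp hc).2.mono b.le_succ
  · exact (mem_filter.mp (inter_subset_left (hX hc))).2

theorem isWeakBalSep_getD_sdiff_of_subset_onlyFrom (hL : IsDirPathDecomp E L)
    (hX : X ⊆ {v ∈ U | OnlyFrom L b v} ∩ L.getD b ∅)
    (h₁ : #{v ∈ U | OnlyBefore L b v} ≤ #{v ∈ U | OnlyFrom L (b + 1) v} + #X + 1)
    (h₂ : #{v ∈ U | OnlyFrom L (b + 1) v} + #X ≤ #{v ∈ U | OnlyBefore L b v} + 1) :
    IsWeakBalSep E U (L.getD b ∅ \ X) := by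
  have hXU : X ⊆ U := hX.trans (inter_subset_left.trans (filter_subset _ _))
  have hn := card_sdiff_getD_sdiff hL hXU (hX.trans inter_subset_right)
  have hQ := card_union_le {v ∈ U | OnlyFrom L (b + 1) v} X
  refine isWeakBalSep_of_subset_union (Q := {v ∈ U | OnlyFrom L (b + 1) v} ∪ X)
    ((sdiff_getD_sdiff_subset hL).trans (union_assoc _ _ _).le) ?_ (by omega) (by omega)
  intro a ha c hc
  refine not_adj_of_onlyFrom_of_onlyBefore hL ?_ (mem_filter.mp hc).2
  rcases mem_union.mp ha with ha | ha
  · exact (mem_filter.mp ha).2.anti b.le_succ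
  · exact (mem_filter.mp (inter_subset_left (hX ha))).2

theorem card_filter_onlyBefore_succ_le_add :
    #{v ∈ U | OnlyBefore L (b + 1) v} ≤
      #{v ∈ U | OnlyBefore L b v} + #({v ∈ U | OnlyBefore L (b + 1) v} ∩ L.getD b ∅) := by
  refine (card_le_card fun v hv => ?_).trans (card_union_le _ _)
  by_cases hvb : v ∈ L.getD b ∅
  · exact mem_union_right _ (mem_inter.mpr ⟨hv, hvb⟩)
  · obtain ⟨hvU, h⟩ := mem_filter.mp hv
    exact mem_union_left _ (mem_filter.mpr ⟨hvU, h.of_succ hvb⟩)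

theorem card_filter_onlyFrom_le_succ_add :
    #{v ∈ U | OnlyFrom L b v} ≤
      #{v ∈ U | OnlyFrom L (b + 1) v} + #({v ∈ U | OnlyFrom L b v} ∩ L.getD b ∅) := by
  refine (card_le_card fun v hv => ?_).trans (card_union_le _ _)
  by_cases hvb : v ∈ L.getD b ∅
  · exact mem_union_right _ (mem_inter.mpr ⟨hv, hvb⟩)
  · obtain ⟨hvU, h⟩ := mem_filter.mp hv
    exact mem_union_left _ (mem_filter.mpr ⟨hvU, h.succ hvb⟩)

end BagCuts

theorem IsDirPathDecomp.exists_isWeakBalSep_card_le [DecidableEq V] {E : V → V → Prop}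
    {L : List (Finset V)} (hL : IsDirPathDecomp E L) {w : ℕ} (hw : ∀ W ∈ L, #W ≤ w + 1)
    (U : Finset V) : ∃ S, #S ≤ w ∧ IsWeakBalSep E U S := by
  rcases U.eq_empty_or_nonempty with rfl | hU
  · exact ⟨∅, Nat.zero_le w, fun v hv => by simp at hv⟩
  obtain ⟨b, hb, hb₁⟩ := exists_filter_onlyBefore_lt_filter_onlyFrom hL hU
  have hW := List.card_getD_le hw b
  have hA := card_filter_onlyBefore_succ_le_add (U := U) (L := L) (b := b)
  have hB := card_filter_onlyFrom_le_succ_add (U := U) (L := L) (b := b)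
  rcases lt_or_ge #{v ∈ U | OnlyBefore L b v} #{v ∈ U | OnlyFrom L (b + 1) v} with h | h
  · obtain ⟨X, hX, hXcard⟩ :=
      exists_subset_card_eq (s := {v ∈ U | OnlyBefore L (b + 1) v} ∩ L.getD b ∅)
        (n := #{v ∈ U | OnlyFrom L (b + 1) v} - #{v ∈ U | OnlyBefore L b v}) (by omega)
    refine ⟨L.getD b ∅ \ X, ?_,
      isWeakBalSep_getD_sdiff_of_subset_onlyBefore hL hX (by omega) (by omega)⟩
    rw [card_sdiff_of_subset (hX.trans inter_subset_right)]
    omega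
  · obtain ⟨X, hX, hXcard⟩ :=
      exists_subset_card_eq (s := {v ∈ U | OnlyFrom L b v} ∩ L.getD b ∅)
        (n := #{v ∈ U | OnlyBefore L b v} + 1 - #{v ∈ U | OnlyFrom L (b + 1) v}) (by omega)
    refine ⟨L.getD b ∅ \ X, ?_,
      isWeakBalSep_getD_sdiff_of_subset_onlyFrom hL hX (by omega) (by omega)⟩
    rw [card_sdiff_of_subset (hX.trans inter_subset_right)]
    omega

theorem isDirPathDecomp_singleton_univ [Fintype V] (E : V → V → Prop) :
    IsDirPathDecomp E [univ] := by
  refine ⟨fun v => ⟨univ, List.mem_singleton_self _, mem_univ v⟩, ?_,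
    fun u v _ => .inl ⟨univ, List.mem_singleton_self _, mem_univ u, mem_univ v⟩⟩
  intro i j k hij hjk _ _ hk
  simp only [List.length_singleton] at hk
  omega

theorem exists_isDirPathDecomp_card_le_dpw [Fintype V] (E : V → V → Prop) :
    ∃ L : List (Finset V), IsDirPathDecomp E L ∧ ∀ W ∈ L, #W ≤ dpw E + 1 :=
  Nat.sInf_mem (s := {w | ∃ L : List (Finset V), IsDirPathDecomp E L ∧ ∀ W ∈ L, #W ≤ w + 1})
    ⟨Fintype.card V, [univ], isDirPathDecomp_singleton_univ E, fun W hW => by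
      rw [List.mem_singleton.mp hW, card_univ]
      exact Nat.le_succ _⟩

/-- For every digraph `G`, `snum(G) ≤ dpw(G)`. -/
theorem snum_le_dpw {V : Type*} [DecidableEq V] [Fintype V] (E : V → V → Prop) :
    snum E ≤ dpw E := by
  obtain ⟨L, hL, hw⟩ := exists_isDirPathDecomp_card_le_dpw E
  refine Finset.sup_le fun U _ => ?_
  obtain ⟨S, hS, hsep⟩ := hL.exists_isWeakBalSep_card_le hw U
  exact (minWeakSep_le_card hsep).trans hS
end
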